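/- Let L be a bounded lattice. Then (i) every φ ∈ MPM(D̄(L),2_τ) is of the form ē_a for some a ∈ L, and (ii) the map a ↦ ē_a is an order-isomorphism from L onto MPM(D̄(L),2_τ) ordered by φ ≤ ψ iff φ⁻¹(1) ⊆ ψ⁻¹(1); in particular, a ↦ ē_a is a bijection of L onto MPM(D̄(L),2_τ), and a ≤ b in L if and only if ē_a⁻¹(1) ⊆ ē_b⁻¹(1). -/

import Mathlib

namespace CanExt

open Classical

/-- A partial map from `X` into the two-element chain `{0,1}` (encoded as `Bool`,
with `false` playing the role of `0` and `true` the role of `1`);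
`φ x = none` means `x` is outside the domain of `φ`. -/
abbrev PMap (X : Type*) := X → Option Bool

/-- The preimage of `1` of a partial map. -/
def pre1 {X : Type*} (φ : PMap X) : Set X := {x | φ x = some true}

/-- The preimage of `0` of a partial map. -/
def pre0 {X : Type*} (φ : PMap X) : Set X := {x | φ x = some false}

/-- A partial map is `E`-preserving if whenever `x, y` lie in its domain and
`(x,y) ∈ E`, then `φ x ≤ φ y`. -/
def EPres {X : Type*} (E : X → X → Prop) (φ : PMap X) : Prop :=
  ∀ ⦃x y : X⦄, E x y → ∀ ⦃a b : Bool⦄, φ x = some a → φ y = some b → a ≤ b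

/-- `PExt ψ φ` : the partial map `ψ` extends the partial map `φ`. -/
def PExt {X : Type*} (ψ φ : PMap X) : Prop :=
  ∀ ⦃x : X⦄ ⦃a : Bool⦄, φ x = some a → ψ x = some a

/-- The set of maximal partial `E`-preserving maps from `(X,E)` into the
two-element chain `2`. -/
def MPE {X : Type*} (E : X → X → Prop) : Set (PMap X) :=
  {φ | EPres E φ ∧ ∀ ψ : PMap X, EPres E ψ → PExt ψ φ → ψ = φ}

/-- A partial morphism from a graph with topology `(X,E,t)` to `2_τ`:
the preimages of `1` and `0` are `t`-closed (equivalently, the domain is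
closed and the restriction to the domain is continuous into discrete `2`),
and the map is `E`-preserving. -/
def PMorphT {X : Type*} (E : X → X → Prop) (t : TopologicalSpace X) (φ : PMap X) : Prop :=
  EPres E φ ∧ @IsClosed X t (pre1 φ) ∧ @IsClosed X t (pre0 φ)

/-- The set of maximal partial morphisms from `(X,E,t)` to `2_τ`. -/
def MPM {X : Type*} (E : X → X → Prop) (t : TopologicalSpace X) : Set (PMap X) :=
  {φ | PMorphT E t φ ∧ ∀ ψ : PMap X, PMorphT E t ψ → PExt ψ φ → ψ = φ}

/-- The relation `E` between partial maps on a lattice `L`: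
`(f,g) ∈ E` iff `f x ≤ g x` for all `x ∈ dom f ∩ dom g`. -/
def ErelP {L : Type*} (f g : PMap L) : Prop :=
  ∀ ⦃x : L⦄ ⦃a b : Bool⦄, f x = some a → g x = some b → a ≤ b

/-- `f ≤₁ g` iff `f⁻¹(1) ⊆ g⁻¹(1)`. -/
def le1 {L : Type*} (f g : PMap L) : Prop := pre1 f ⊆ pre1 g

/-- `f ≤₂ g` iff `f⁻¹(0) ⊆ g⁻¹(0)`. -/
def le2 {L : Type*} (f g : PMap L) : Prop := pre0 f ⊆ pre0 g

section Lat

variable (L : Type*) [Lattice L] [BoundedOrder L]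

/-- A partial homomorphism from a bounded lattice `L` to the two-element
bounded lattice `2_B`: its domain is a `{0,1}`-sublattice of `L` and the
restriction to the domain is a bounded-lattice homomorphism. -/
def PHom (f : PMap L) : Prop :=
  f ⊥ = some false ∧ f ⊤ = some true ∧
  ∀ ⦃a b : L⦄ ⦃x y : Bool⦄, f a = some x → f b = some y →
    f (a ⊓ b) = some (x ⊓ y) ∧ f (a ⊔ b) = some (x ⊔ y)

/-- The set of maximal partial homomorphisms (MPHs) from `L` to `2_B`. -/
def MPHset : Set (PMap L) := {f | PHom L f ∧ ∀ g : PMap L, PHom L g → PExt g f → g = f}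

/-- The underlying set of the graph `D♭(L)`. -/
abbrev MPHsub := {f : PMap L // f ∈ MPHset L}

/-- The relation `E` on `MPH(L, 2_B)`, giving the graph `D♭(L)`. -/
def EM (f g : MPHsub L) : Prop := ErelP f.1 g.1

/-- The evaluation map `e_a` on `MPH(L,2_B)` : `e_a(f) = f(a)` if `a ∈ dom f`. -/
def evalM (a : L) : PMap (MPHsub L) := fun f => f.1 a

/-- `V_a = {f ∈ MPH(L,2_B) : f(a) = 0}`. -/
def VaM (a : L) : Set (MPHsub L) := {f | f.1 a = some false}

/-- `W_a = {f ∈ MPH(L,2_B) : f(a) = 1}`. -/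
def WaM (a : L) : Set (MPHsub L) := {f | f.1 a = some true}

/-- The topology on `MPH(L,2_B)` with the sets `V_a`, `W_a` as a subbasis of
closed sets. -/
def tauM : TopologicalSpace (MPHsub L) :=
  TopologicalSpace.generateFrom {U | ∃ a : L, U = (VaM L a)ᶜ ∨ U = (WaM L a)ᶜ}

/-- A (nonempty) lattice filter. -/
def IsLatFilter (F : Set L) : Prop :=
  F.Nonempty ∧ (∀ ⦃a b : L⦄, a ∈ F → a ≤ b → b ∈ F) ∧
    (∀ ⦃a b : L⦄, a ∈ F → b ∈ F → a ⊓ b ∈ F)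

/-- A (nonempty) lattice ideal. -/
def IsLatIdeal (I : Set L) : Prop :=
  I.Nonempty ∧ (∀ ⦃a b : L⦄, a ∈ I → b ≤ a → b ∈ I) ∧
    (∀ ⦃a b : L⦄, a ∈ I → b ∈ I → a ⊔ b ∈ I)

/-- The set of special partial homomorphisms (SPHs) from `L` to `2_B`:
`f⁻¹(1)` is a nonempty filter, `f⁻¹(0)` is a nonempty ideal, and they are
disjoint. -/
def SPHset : Set (PMap L) :=
  {f | IsLatFilter L (pre1 f) ∧ IsLatIdeal L (pre0 f) ∧ Disjoint (pre1 f) (pre0 f)}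

/-- The underlying set of the graph `D̄♭(L)`. -/
abbrev SPHsub := {f : PMap L // f ∈ SPHset L}

/-- The relation `E` on `SPH(L, 2_B)`, giving the graph `D̄♭(L)`. -/
def ES (f g : SPHsub L) : Prop := ErelP f.1 g.1

/-- The evaluation map `ē_a` on `SPH(L,2_B)`. -/
def evalS (a : L) : PMap (SPHsub L) := fun f => f.1 a

/-- `V_a = {f ∈ SPH(L,2_B) : f(a) = 0}`. -/
def VaS (a : L) : Set (SPHsub L) := {f | f.1 a = some false}

/-- `W_a = {f ∈ SPH(L,2_B) : f(a) = 1}`. -/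
def WaS (a : L) : Set (SPHsub L) := {f | f.1 a = some true}

/-- The topology on `SPH(L,2_B)` with the sets `V_a`, `W_a` as a subbasis of
closed sets. -/
def tauS : TopologicalSpace (SPHsub L) :=
  TopologicalSpace.generateFrom {U | ∃ a : L, U = (VaS L a)ᶜ ∨ U = (WaS L a)ᶜ}

/-- The carrier of the completion built from `D♭(L)`. -/
abbrev CX := {φ : PMap (MPHsub L) // φ ∈ MPE (EM L)}

/-- The carrier of the completion built from `D̄♭(L)`. -/
abbrev CY := {φ : PMap (SPHsub L) // φ ∈ MPE (ES L)}

end Lat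

/-!
An MPM `φ` of `D̄(L)` is described by `C = φ⁻¹(1)` and `D = φ⁻¹(0)`. Maximality forces `D`
to contain every SPH `g` whose ideal meets the filter of each `c ∈ C`: otherwise `φ` could be
extended by `0` on the closed set of SPHs extending `g`. So the ideals of members of `D` are
closed under finite intersections, and as `D` is closed, the SPH `({⊤}, B)`, with `B` the
intersection of all these ideals, lies in the closure of `D`, hence in `D`. Dually, with `A`
the intersection of the filters of members of `C`, the SPH `(A, {⊥})` lies in `C`. These two
SPHs are not `E`-related, so some `a` lies in `A ∩ B`; then `ē_a` extends `φ`, so `φ = ē_a`.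
-/

open Topology

attribute [local instance] tauS

section Graph

variable {X : Type*} {E : X → X → Prop} {t : TopologicalSpace X} {φ : PMap X}

theorem erelP_iff_disjoint {f g : PMap X} : ErelP f g ↔ Disjoint (pre1 f) (pre0 g) := by
  simp only [ErelP, Set.disjoint_left, pre1, pre0]
  refine ⟨fun h x hf hg => absurd (h hf hg) (by decide), fun h x a b hf hg => ?_⟩
  cases a <;> cases b <;> first | decide | exact absurd hg (h hf)

theorem ePres_iff : EPres E φ ↔ ∀ x ∈ pre1 φ, ∀ y ∈ pre0 φ, ¬ E x y := by
  refine ⟨fun h x hx y hy hxy => absurd (h hxy hx hy) (by decide),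
    fun h x y hxy a b hx hy => ?_⟩
  cases a <;> cases b <;> first | decide | exact absurd hxy (h x hx y hy)

theorem pExt_iff_subset {ψ : PMap X} :
    PExt ψ φ ↔ pre1 φ ⊆ pre1 ψ ∧ pre0 φ ⊆ pre0 ψ := by
  refine ⟨fun h => ⟨fun x hx => h hx, fun x hx => h hx⟩, fun h x a hx => ?_⟩
  cases a
  exacts [h.2 hx, h.1 hx]

theorem subset_pre1_of_mem_MPM (hφ : φ ∈ MPM E t) (hE : ∀ x, E x x) {K : Set X}
    (hK : IsClosed[t] K) (hKD : ∀ x ∈ K, ∀ y ∈ pre0 φ, ¬ E x y) : K ⊆ pre1 φ := by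
  have hKD' : ∀ x ∈ K, x ∉ pre0 φ := fun x hx h => hKD x hx x h (hE x)
  let ψ : PMap X := K.piecewise (fun _ => some true) φ
  have hψ1 : pre1 ψ = K ∪ pre1 φ := by
    ext x
    by_cases hx : x ∈ K <;> simp [ψ, pre1, hx]
  have hψ0 : pre0 ψ = pre0 φ := by
    ext x
    by_cases hx : x ∈ K
    · simpa [ψ, pre0, hx] using hKD' x hx
    · simp [ψ, pre0, hx]
  have hψ : PMorphT E t ψ := by
    refine ⟨ePres_iff.2 ?_, hψ1 ▸ hK.union hφ.1.2.1, hψ0 ▸ hφ.1.2.2⟩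
    rw [hψ1, hψ0]
    rintro x (hx | hx)
    exacts [hKD x hx, ePres_iff.1 hφ.1.1 x hx]
  have hext : PExt ψ φ := pExt_iff_subset.2 ⟨hψ1 ▸ Set.subset_union_right, hψ0.ge⟩
  rw [← hφ.2 ψ hψ hext, hψ1]
  exact Set.subset_union_left

theorem subset_pre0_of_mem_MPM (hφ : φ ∈ MPM E t) (hE : ∀ x, E x x) {K : Set X}
    (hK : IsClosed[t] K) (hCK : ∀ x ∈ pre1 φ, ∀ y ∈ K, ¬ E x y) : K ⊆ pre0 φ := by
  have hCK' : ∀ y ∈ K, y ∉ pre1 φ := fun y hy h => hCK y h y hy (hE y)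
  let ψ : PMap X := K.piecewise (fun _ => some false) φ
  have hψ0 : pre0 ψ = K ∪ pre0 φ := by
    ext x
    by_cases hx : x ∈ K <;> simp [ψ, pre0, hx]
  have hψ1 : pre1 ψ = pre1 φ := by
    ext x
    by_cases hx : x ∈ K
    · simpa [ψ, pre1, hx] using hCK' x hx
    · simp [ψ, pre1, hx]
  have hψ : PMorphT E t ψ := by
    refine ⟨ePres_iff.2 ?_, hψ1 ▸ hφ.1.2.1, hψ0 ▸ hK.union hφ.1.2.2⟩
    rw [hψ1, hψ0]
    rintro x hx y (hy | hy)
    exacts [hCK x hx y hy, ePres_iff.1 hφ.1.1 x hx y hy]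
  have hext : PExt ψ φ := pExt_iff_subset.2 ⟨hψ1.ge, hψ0 ▸ Set.subset_union_right⟩
  rw [← hφ.2 ψ hψ hext, hψ0]
  exact Set.subset_union_left

noncomputable def pmapOfSets (F I : Set X) : PMap X :=
  fun x => if x ∈ F then some true else if x ∈ I then some false else none

@[simp]
theorem pre1_pmapOfSets (F I : Set X) : pre1 (pmapOfSets F I) = F := by
  ext x
  by_cases hF : x ∈ F <;> by_cases hI : x ∈ I <;> simp [pmapOfSets, pre1, hF]

@[simp]
theorem pre0_pmapOfSets {F I : Set X} (h : Disjoint F I) : pre0 (pmapOfSets F I) = I := by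
  ext x
  by_cases hF : x ∈ F <;> by_cases hI : x ∈ I <;> simp [pmapOfSets, pre0, hF, hI]
  exact Set.disjoint_left.1 h hF hI

end Graph

section Lattice

variable {L : Type*} [Lattice L] {F I J : Set L}

section Bounded

variable [BoundedOrder L]

theorem IsLatFilter.top_mem (hF : IsLatFilter L F) : ⊤ ∈ F :=
  hF.1.elim fun _ hx => hF.2.1 hx le_top

theorem IsLatIdeal.bot_mem (hI : IsLatIdeal L I) : ⊥ ∈ I :=
  hI.1.elim fun _ hx => hI.2.1 hx bot_le

theorem isLatFilter_iInter {ι : Sort*} {F : ι → Set L} (h : ∀ i, IsLatFilter L (F i)) :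
    IsLatFilter L (⋂ i, F i) := by
  refine ⟨⟨⊤, Set.mem_iInter.2 fun i => (h i).top_mem⟩, fun a b ha hab => ?_,
    fun a b ha hb => ?_⟩
  all_goals simp only [Set.mem_iInter] at *
  exacts [fun i => (h i).2.1 (ha i) hab, fun i => (h i).2.2 (ha i) (hb i)]

theorem isLatIdeal_iInter {ι : Sort*} {I : ι → Set L} (h : ∀ i, IsLatIdeal L (I i)) :
    IsLatIdeal L (⋂ i, I i) := by
  refine ⟨⟨⊥, Set.mem_iInter.2 fun i => (h i).bot_mem⟩, fun a b ha hba => ?_,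
    fun a b ha hb => ?_⟩
  all_goals simp only [Set.mem_iInter] at *
  exacts [fun i => (h i).2.1 (ha i) hba, fun i => (h i).2.2 (ha i) (hb i)]

theorem IsLatFilter.inter (hF : IsLatFilter L F) (hJ : IsLatFilter L J) :
    IsLatFilter L (F ∩ J) := by
  rw [Set.inter_eq_iInter]
  exact isLatFilter_iInter (Bool.forall_bool.2 ⟨hJ, hF⟩)

theorem IsLatIdeal.inter (hI : IsLatIdeal L I) (hJ : IsLatIdeal L J) :
    IsLatIdeal L (I ∩ J) := by
  rw [Set.inter_eq_iInter]
  exact isLatIdeal_iInter (Bool.forall_bool.2 ⟨hJ, hI⟩)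

theorem disjoint_Ici_top {I : Set L} (h : ⊤ ∉ I) : Disjoint (Set.Ici ⊤) I :=
  Set.disjoint_left.2 fun _ hx hxI => h (top_le_iff.1 hx ▸ hxI)

theorem disjoint_Iic_bot {F : Set L} (h : ⊥ ∉ F) : Disjoint F (Set.Iic ⊥) :=
  Set.disjoint_right.2 fun _ hx hxF => h (le_bot_iff.1 hx ▸ hxF)

end Bounded

theorem isLatFilter_Ici (a : L) : IsLatFilter L (Set.Ici a) :=
  ⟨⟨a, le_rfl⟩, fun _ _ hx hxy => le_trans hx hxy, fun _ _ hx hy => le_inf hx hy⟩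

theorem isLatIdeal_Iic (a : L) : IsLatIdeal L (Set.Iic a) :=
  ⟨⟨a, le_rfl⟩, fun _ _ hx hyx => le_trans hyx hx, fun _ _ hx hy => sup_le hx hy⟩

theorem IsLatFilter.inter_inter_nonempty (hF : IsLatFilter L F) (hI : IsLatIdeal L I)
    (hJ : IsLatIdeal L J) (hFI : (F ∩ I).Nonempty) (hFJ : (F ∩ J).Nonempty) :
    (F ∩ (I ∩ J)).Nonempty :=
  let ⟨x, hxF, hxI⟩ := hFI
  let ⟨y, hyF, hyJ⟩ := hFJ
  ⟨x ⊓ y, hF.2.2 hxF hyF, hI.2.1 hxI inf_le_left, hJ.2.1 hyJ inf_le_right⟩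

theorem IsLatIdeal.inter_inter_nonempty (hI : IsLatIdeal L I) (hF : IsLatFilter L F)
    (hJ : IsLatFilter L J) (hFI : (F ∩ I).Nonempty) (hJI : (J ∩ I).Nonempty) :
    ((F ∩ J) ∩ I).Nonempty :=
  let ⟨x, hxF, hxI⟩ := hFI
  let ⟨y, hyJ, hyI⟩ := hJI
  ⟨x ⊔ y, ⟨hF.2.1 hxF le_sup_left, hJ.2.1 hyJ le_sup_right⟩, hI.2.2 hxI hyI⟩

end Lattice

section SPH

variable {L : Type*} [Lattice L]

theorem SPHsub.top_mem [BoundedOrder L] (f : SPHsub L) : ⊤ ∈ pre1 f.1 := f.2.1.top_mem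

theorem SPHsub.bot_mem [BoundedOrder L] (f : SPHsub L) : ⊥ ∈ pre0 f.1 := f.2.2.1.bot_mem

theorem es_iff_disjoint {f g : SPHsub L} : ES L f g ↔ Disjoint (pre1 f.1) (pre0 g.1) :=
  erelP_iff_disjoint

theorem es_refl (f : SPHsub L) : ES L f f := es_iff_disjoint.2 f.2.2.2

noncomputable def ofFilterIdeal (F I : Set L) (hF : IsLatFilter L F) (hI : IsLatIdeal L I)
    (h : Disjoint F I) : SPHsub L :=
  ⟨pmapOfSets F I, by simpa [SPHset, pre0_pmapOfSets h] using ⟨hF, hI, h⟩⟩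

variable {F I : Set L} {hF : IsLatFilter L F} {hI : IsLatIdeal L I} {h : Disjoint F I}

@[simp]
theorem pre1_ofFilterIdeal : pre1 (ofFilterIdeal F I hF hI h).1 = F := pre1_pmapOfSets F I

@[simp]
theorem pre0_ofFilterIdeal : pre0 (ofFilterIdeal F I hF hI h).1 = I := pre0_pmapOfSets h

end SPH

section Topology

variable {L : Type*} [Lattice L]

theorem isClosed_VaS (a : L) : IsClosed (VaS L a) :=
  isOpen_compl_iff.1 (TopologicalSpace.GenerateOpen.basic _ ⟨a, Or.inl rfl⟩)

theorem isClosed_WaS (a : L) : IsClosed (WaS L a) :=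
  isOpen_compl_iff.1 (TopologicalSpace.GenerateOpen.basic _ ⟨a, Or.inr rfl⟩)

theorem isClosed_setOf_pExt (g : SPHsub L) : IsClosed {f : SPHsub L | PExt f.1 g.1} := by
  have : {f : SPHsub L | PExt f.1 g.1} =
      (⋂ x ∈ pre1 g.1, WaS L x) ∩ ⋂ x ∈ pre0 g.1, VaS L x := by
    ext f
    simp [pExt_iff_subset, Set.subset_def, WaS, VaS, pre1, pre0]
  rw [this]
  exact (isClosed_biInter fun x _ => isClosed_WaS x).inter
    (isClosed_biInter fun x _ => isClosed_VaS x)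

/-- The basic open set `⋂ s ∈ S, (V_s)ᶜ ∩ ⋂ t ∈ T, (W_t)ᶜ` of `tauS`. -/
def nbhdS (S T : Finset L) : Set (SPHsub L) :=
  {f | (∀ s ∈ S, s ∉ pre0 f.1) ∧ ∀ t ∈ T, t ∉ pre1 f.1}

theorem exists_nbhdS_subset_of_isOpen {U : Set (SPHsub L)} (hU : IsOpen U) {g : SPHsub L}
    (hg : g ∈ U) : ∃ S T, g ∈ nbhdS S T ∧ nbhdS S T ⊆ U := by
  induction hU generalizing g with
  | basic U hU =>
    obtain ⟨a, rfl | rfl⟩ := hU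
    · exact ⟨{a}, ∅, by simpa [nbhdS, VaS, pre0] using hg,
        fun f hf => by simpa [nbhdS, VaS, pre0] using hf⟩
    · exact ⟨∅, {a}, by simpa [nbhdS, WaS, pre1] using hg,
        fun f hf => by simpa [nbhdS, WaS, pre1] using hf⟩
  | univ => exact ⟨∅, ∅, by simp [nbhdS], Set.subset_univ _⟩
  | inter U V _ _ ihU ihV =>
    obtain ⟨S, T, hgST, hST⟩ := ihU hg.1
    obtain ⟨S', T', hgST', hST'⟩ := ihV hg.2
    refine ⟨S ∪ S', T ∪ T', ?_, fun f hf => ⟨hST ?_, hST' ?_⟩⟩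
    all_goals simp_all [nbhdS, or_imp, forall_and]
  | sUnion 𝒰 _ ih =>
    obtain ⟨U, hU, hgU⟩ := hg
    obtain ⟨S, T, hgST, hST⟩ := ih U hU hgU
    exact ⟨S, T, hgST, hST.trans (Set.subset_sUnion_of_mem hU)⟩

theorem mem_of_isClosed_of_forall_nbhdS {K : Set (SPHsub L)} (hK : IsClosed K)
    {g : SPHsub L} (h : ∀ S T, g ∈ nbhdS S T → (nbhdS S T ∩ K).Nonempty) : g ∈ K := by
  by_contra hg
  obtain ⟨S, T, hgST, hST⟩ := exists_nbhdS_subset_of_isOpen hK.isOpen_compl hg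
  obtain ⟨f, hfST, hfK⟩ := h S T hgST
  exact hST hfST hfK

theorem pMorphT_evalS (a : L) : PMorphT (ES L) (tauS L) (evalS L a) :=
  ⟨fun _ _ hfg _ _ hf hg => hfg hf hg, isClosed_WaS a, isClosed_VaS a⟩

end Topology

section MPM

variable {L : Type*} [Lattice L] {φ : PMap (SPHsub L)}

theorem inter_nonempty_of_mem_MPM (hφ : φ ∈ MPM (ES L) (tauS L)) {c d : SPHsub L}
    (hc : c ∈ pre1 φ) (hd : d ∈ pre0 φ) : (pre1 c.1 ∩ pre0 d.1).Nonempty := by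
  rw [← Set.not_disjoint_iff_nonempty_inter, ← es_iff_disjoint]
  exact ePres_iff.1 hφ.1.1 c hc d hd

theorem mem_pre0_of_forall_inter_nonempty (hφ : φ ∈ MPM (ES L) (tauS L)) {g : SPHsub L}
    (h : ∀ c ∈ pre1 φ, (pre1 c.1 ∩ pre0 g.1).Nonempty) : g ∈ pre0 φ := by
  refine subset_pre0_of_mem_MPM hφ es_refl (isClosed_setOf_pExt g) (fun c hc f hf hcf => ?_)
    fun _ _ h => h
  have hdisj := (es_iff_disjoint.1 hcf).mono_right (pExt_iff_subset.1 hf).2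
  exact Set.not_disjoint_iff_nonempty_inter.2 (h c hc) hdisj

theorem mem_pre1_of_forall_inter_nonempty (hφ : φ ∈ MPM (ES L) (tauS L)) {g : SPHsub L}
    (h : ∀ d ∈ pre0 φ, (pre1 g.1 ∩ pre0 d.1).Nonempty) : g ∈ pre1 φ := by
  refine subset_pre1_of_mem_MPM hφ es_refl (isClosed_setOf_pExt g) (fun f hf d hd hfd => ?_)
    fun _ _ h => h
  have hdisj := (es_iff_disjoint.1 hfd).mono_left (pExt_iff_subset.1 hf).1
  exact Set.not_disjoint_iff_nonempty_inter.2 (h d hd) hdisj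

theorem exists_forall_pre0_subset_of_mem_MPM [BoundedOrder L]
    (hφ : φ ∈ MPM (ES L) (tauS L)) (hD : (pre0 φ).Nonempty) :
    ∃ q ∈ pre0 φ, ∀ d ∈ pre0 φ, pre0 q.1 ⊆ pre0 d.1 := by
  have htop : ∀ {d : SPHsub L} {I : Set L}, I ⊆ pre0 d.1 → ⊤ ∉ I :=
    fun {d} _ hI h => Set.disjoint_left.1 d.2.2.2 d.top_mem (hI h)
  let q (I : Set L) (hI : IsLatIdeal L I) (h : ⊤ ∉ I) : SPHsub L :=
    ofFilterIdeal (Set.Ici ⊤) I (isLatFilter_Ici ⊤) hI (disjoint_Ici_top h)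
  have hq : ∀ I hI h, (∀ c ∈ pre1 φ, (pre1 c.1 ∩ I).Nonempty) → q I hI h ∈ pre0 φ :=
    fun I hI h hC => mem_pre0_of_forall_inter_nonempty hφ (by simpa [q] using hC)
  let B := ⋂ d ∈ pre0 φ, pre0 (d : SPHsub L).1
  have hB : IsLatIdeal L B := isLatIdeal_iInter fun d => isLatIdeal_iInter fun _ => d.2.2.1
  have hBtop : ⊤ ∉ B := htop (Set.biInter_subset_of_mem hD.some_mem)
  refine ⟨q B hB hBtop, ?_, fun d hd =>
    pre0_ofFilterIdeal.trans_subset (Set.biInter_subset_of_mem hd)⟩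
  -- The ideals of members of `φ⁻¹(0)` are directed, so the finitely many elements a basic
  -- neighbourhood of `q B` keeps out of the ideal lie outside a single one of them.
  refine mem_of_isClosed_of_forall_nbhdS hφ.1.2.2 fun S T ⟨hS, hT⟩ => ?_
  have hdir : DirectedOn (fun d d' : SPHsub L => (pre0 d.1)ᶜ ⊆ (pre0 d'.1)ᶜ) (pre0 φ) := by
    intro d₁ hd₁ d₂ hd₂
    have hmem := hq _ (d₁.2.2.1.inter d₂.2.2.1) (htop Set.inter_subset_left) fun c hc =>
      c.2.1.inter_inter_nonempty d₁.2.2.1 d₂.2.2.1 (inter_nonempty_of_mem_MPM hφ hc hd₁)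
        (inter_nonempty_of_mem_MPM hφ hc hd₂)
    exact ⟨_, hmem, by simp [q], by simp [q]⟩
  have hcover : (S : Set L) ⊆ ⋃ d ∈ pre0 φ, (pre0 (d : SPHsub L).1)ᶜ := fun s hs => by
    simpa [q, B] using hS s hs
  obtain ⟨d, hd, hSd⟩ := hdir.exists_mem_subset_of_finset_subset_biUnion hD hcover
  have hmem := hq _ d.2.2.1 (htop subset_rfl) fun c hc => inter_nonempty_of_mem_MPM hφ hc hd
  refine ⟨_, ⟨fun s hs => ?_, fun t ht => ?_⟩, hmem⟩
  · simpa [q] using hSd hs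
  · simpa [q] using hT t ht

theorem exists_forall_pre1_subset_of_mem_MPM [BoundedOrder L]
    (hφ : φ ∈ MPM (ES L) (tauS L)) (hC : (pre1 φ).Nonempty) :
    ∃ r ∈ pre1 φ, ∀ c ∈ pre1 φ, pre1 r.1 ⊆ pre1 c.1 := by
  have hbot : ∀ {c : SPHsub L} {F : Set L}, F ⊆ pre1 c.1 → ⊥ ∉ F :=
    fun {c} _ hF h => Set.disjoint_left.1 c.2.2.2 (hF h) c.bot_mem
  let r (F : Set L) (hF : IsLatFilter L F) (h : ⊥ ∉ F) : SPHsub L :=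
    ofFilterIdeal F (Set.Iic ⊥) hF (isLatIdeal_Iic ⊥) (disjoint_Iic_bot h)
  have hr : ∀ F hF h, (∀ d ∈ pre0 φ, (F ∩ pre0 d.1).Nonempty) → r F hF h ∈ pre1 φ :=
    fun F hF h hD => mem_pre1_of_forall_inter_nonempty hφ (by simpa [r] using hD)
  let A := ⋂ c ∈ pre1 φ, pre1 (c : SPHsub L).1
  have hA : IsLatFilter L A := isLatFilter_iInter fun c => isLatFilter_iInter fun _ => c.2.1
  have hAbot : ⊥ ∉ A := hbot (Set.biInter_subset_of_mem hC.some_mem)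
  refine ⟨r A hA hAbot, ?_, fun c hc =>
    pre1_ofFilterIdeal.trans_subset (Set.biInter_subset_of_mem hc)⟩
  refine mem_of_isClosed_of_forall_nbhdS hφ.1.2.1 fun S T ⟨hS, hT⟩ => ?_
  have hdir : DirectedOn (fun c c' : SPHsub L => (pre1 c.1)ᶜ ⊆ (pre1 c'.1)ᶜ) (pre1 φ) := by
    intro c₁ hc₁ c₂ hc₂
    have hmem := hr _ (c₁.2.1.inter c₂.2.1) (hbot Set.inter_subset_left) fun d hd =>
      d.2.2.1.inter_inter_nonempty c₁.2.1 c₂.2.1 (inter_nonempty_of_mem_MPM hφ hc₁ hd)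
        (inter_nonempty_of_mem_MPM hφ hc₂ hd)
    exact ⟨_, hmem, by simp [r], by simp [r]⟩
  have hcover : (T : Set L) ⊆ ⋃ c ∈ pre1 φ, (pre1 (c : SPHsub L).1)ᶜ := fun t ht => by
    simpa [r, A] using hT t ht
  obtain ⟨c, hc, hTc⟩ := hdir.exists_mem_subset_of_finset_subset_biUnion hC hcover
  have hmem := hr _ c.2.1 (hbot subset_rfl) fun d hd => inter_nonempty_of_mem_MPM hφ hc hd
  refine ⟨_, ⟨fun s hs => ?_, fun t ht => ?_⟩, hmem⟩
  · simpa [r] using hS s hs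
  · simpa [r] using hTc ht

theorem eq_evalS_of_mem_MPM (hφ : φ ∈ MPM (ES L) (tauS L)) {a : L}
    (hC : ∀ c ∈ pre1 φ, a ∈ pre1 c.1) (hD : ∀ d ∈ pre0 φ, a ∈ pre0 d.1) :
    φ = evalS L a :=
  (hφ.2 _ (pMorphT_evalS a) (pExt_iff_subset.2 ⟨hC, hD⟩)).symm

theorem exists_eq_evalS_of_mem_MPM [BoundedOrder L] (hφ : φ ∈ MPM (ES L) (tauS L)) :
    ∃ a, φ = evalS L a := by
  rcases (pre0 φ).eq_empty_or_nonempty with hD | hD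
  · exact ⟨⊤, eq_evalS_of_mem_MPM hφ (fun c _ => c.top_mem) (by simp [hD])⟩
  rcases (pre1 φ).eq_empty_or_nonempty with hC | hC
  · exact ⟨⊥, eq_evalS_of_mem_MPM hφ (by simp [hC]) (fun d _ => d.bot_mem)⟩
  obtain ⟨q, hqD, hq⟩ := exists_forall_pre0_subset_of_mem_MPM hφ hD
  obtain ⟨r, hrC, hr⟩ := exists_forall_pre1_subset_of_mem_MPM hφ hC
  obtain ⟨a, har, haq⟩ := inter_nonempty_of_mem_MPM hφ hrC hqD
  exact ⟨a, eq_evalS_of_mem_MPM hφ (fun c hc => hr c hc har) (fun d hd => hq d hd haq)⟩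

end MPM

section Evaluation

variable {L : Type*} [Lattice L]

theorem evalS_mem_MPM (a : L) : evalS L a ∈ MPM (ES L) (tauS L) := by
  refine ⟨pMorphT_evalS a, fun ψ hψ hext => funext fun f => ?_⟩
  change ψ f = f.1 a
  rcases hfa : f.1 a with _ | b
  · have hI : Disjoint (Set.Ici a) (pre0 f.1) := Set.disjoint_left.2 fun x hax hx => by
      simpa [pre0, hfa] using f.2.2.1.2.1 hx hax
    have hF : Disjoint (pre1 f.1) (Set.Iic a) := Set.disjoint_left.2 fun x hx hxa => by
      simpa [pre1, hfa] using f.2.1.2.1 hx hxa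
    -- `(↑a, f⁻¹(0)) E f E (f⁻¹(1), ↓a)`, and `ψ` sends these two SPHs to `1` and `0`.
    let g := ofFilterIdeal _ _ (isLatFilter_Ici a) f.2.2.1 hI
    let h := ofFilterIdeal _ _ f.2.1 (isLatIdeal_Iic a) hF
    have hg : g ∈ pre1 ψ := hext (show a ∈ pre1 g.1 by simp [g])
    have hh : h ∈ pre0 ψ := hext (show a ∈ pre0 h.1 by simp [h])
    rcases hψf : ψ f with _ | _ | _
    · rfl
    · exact absurd (es_iff_disjoint.2 (by simpa [g] using hI)) (ePres_iff.1 hψ.1 g hg f hψf)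
    · exact absurd (es_iff_disjoint.2 (by simpa [h] using hF)) (ePres_iff.1 hψ.1 f hψf h hh)
  · exact hext hfa

theorem le_iff_pre1_evalS_subset (a b : L) : a ≤ b ↔ pre1 (evalS L a) ⊆ pre1 (evalS L b) := by
  refine ⟨fun hab f hf => f.2.1.2.1 hf hab, fun hsub => ?_⟩
  by_contra hab
  have hdisj : Disjoint (Set.Ici a) (Set.Iic b) :=
    Set.disjoint_left.2 fun x hax hxb => hab (hax.trans hxb)
  let f := ofFilterIdeal _ _ (isLatFilter_Ici a) (isLatIdeal_Iic b) hdisj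
  have hfb : b ∈ pre1 f.1 := hsub (show a ∈ pre1 f.1 by simp [f])
  exact hab (by simpa [f] using hfb)

end Evaluation

/-- Let `L` be a bounded lattice. Then (i) every
`φ ∈ MPM(D̄(L),2_τ)` has the form `ē_a` for some `a ∈ L`, and (ii) the map
`a ↦ ē_a` is an order-isomorphism from `L` onto `MPM(D̄(L),2_τ)` ordered by
`φ ≤ ψ ↔ φ⁻¹(1) ⊆ ψ⁻¹(1)`: it is a bijection of `L` onto `MPM(D̄(L),2_τ)`,
and `a ≤ b` iff `ē_a⁻¹(1) ⊆ ē_b⁻¹(1)`. -/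
theorem stmt_15 (L : Type*) [Lattice L] [BoundedOrder L] :
    (∀ φ ∈ MPM (ES L) (tauS L), ∃ a : L, φ = evalS L a) ∧
    (∀ a : L, evalS L a ∈ MPM (ES L) (tauS L)) ∧
    Function.Injective (evalS L) ∧
    (∀ a b : L, a ≤ b ↔ pre1 (evalS L a) ⊆ pre1 (evalS L b)) := by
  refine ⟨fun φ hφ => exists_eq_evalS_of_mem_MPM hφ, evalS_mem_MPM, fun a b hab => ?_,
    le_iff_pre1_evalS_subset⟩
  exact le_antisymm ((le_iff_pre1_evalS_subset a b).2 (hab ▸ subset_rfl))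
    ((le_iff_pre1_evalS_subset b a).2 (hab ▸ subset_rfl))

end CanExt
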